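/- arXiv:2601.23164 — 2 statements merged into one kernel-verified Lean document; each statement's English description precedes it below -/
import Mathlib

section
/- Let p ∈ (1,2] with conjugate q ≥ 2, and let φ(x)_i = sign(x_i)|x_i|^{q-1} componentwise for x ∈ ℝ^d. Then for q > 2 and all u, v ∈ ℝ^d: ‖φ(u) − φ(v)‖_p ≤ 2(q−1)·max{‖u‖_q, ‖v‖_q}^{q−2}·‖u − v‖_q. -/
open Real

lemma phi_eq (q : ℝ) (t : ℝ) :
    Real.sign t * |t| ^ (q - 1) = t * |t| ^ (q - 2) := by
  rcases lt_trichotomy t 0 with h | h | h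
  · rw [Real.sign_of_neg h, abs_of_neg h]
    have h2 : (0:ℝ) < -t := by linarith
    rw [show q - 1 = 1 + (q-2) by ring, Real.rpow_add h2, Real.rpow_one]
    ring
  · simp [h, Real.sign_zero]
  · rw [Real.sign_of_pos h, abs_of_pos h]
    rw [show q - 1 = 1 + (q-2) by ring, Real.rpow_add h, Real.rpow_one]
    ring

lemma phi_deriv (q : ℝ) (hq : 2 < q) (t : ℝ) :
    HasDerivAt (fun x => x * |x| ^ (q - 2)) ((q - 1) * |t| ^ (q - 2)) t := by
  rcases eq_or_ne t 0 with rfl | ht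
  · rw [abs_zero, Real.zero_rpow (by linarith), mul_zero]
    rw [hasDerivAt_iff_tendsto_slope]
    have habs0 : ContinuousAt (fun x : ℝ => |x|) 0 := continuous_abs.continuousAt
    have h1 : Filter.Tendsto (fun x : ℝ => |x| ^ (q - 2)) (nhdsWithin 0 {(0:ℝ)}ᶜ) (nhds 0) := by
      have h2 := (Real.continuousAt_rpow_const |(0:ℝ)| (q-2) (Or.inr (by linarith))).comp habs0
      have h0 : |(0:ℝ)| ^ (q-2) = 0 := by
        rw [abs_zero, Real.zero_rpow (by linarith : q - 2 ≠ 0)]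
      rw [ContinuousAt] at h2
      simp only [Function.comp] at h2
      rw [h0] at h2
      exact h2.mono_left nhdsWithin_le_nhds
    refine h1.congr' ?_
    filter_upwards [self_mem_nhdsWithin] with x hx
    have hx0 : x ≠ 0 := hx
    simp only [slope, sub_zero, vsub_eq_sub, smul_eq_mul, mul_zero, zero_mul]
    field_simp
  · have habs : HasDerivAt (fun x : ℝ => |x| ^ (q - 2))
        ((q-2) * |t| ^ (q - 3) * (SignType.sign t : ℝ)) t := by
      have := (Real.hasDerivAt_rpow_const (p := q - 2) (Or.inl (abs_ne_zero.2 ht))).comp t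
        (hasDerivAt_abs ht)
      exact this.congr_deriv (by ring_nf)
    have hd := (hasDerivAt_id t).mul habs
    refine hd.congr_deriv ?_
    have hts : t * (SignType.sign t : ℝ) = |t| := by
      rcases lt_trichotomy t 0 with h | h | h
      · simp [h, abs_of_neg h]
      · exact absurd h ht
      · simp [h, abs_of_pos h]
    have habst : (0:ℝ) < |t| := abs_pos.2 ht
    have h3 : |t| ^ (q - 3) * |t| = |t| ^ (q-2) := by
      rw [show q - 2 = (q-3) + 1 by ring, Real.rpow_add habst, Real.rpow_one]
    have h4 : id t * ((q - 2) * |t| ^ (q - 3) * (SignType.sign t : ℝ))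
        = (q-2) * |t|^(q-2) := by
      simp only [id]
      calc t * ((q - 2) * |t| ^ (q - 3) * (SignType.sign t : ℝ))
          = (q-2) * (|t|^(q-3) * (t * (SignType.sign t : ℝ))) := by ring
        _ = (q-2) * (|t|^(q-3) * |t|) := by rw [hts]
        _ = _ := by rw [h3]
    rw [h4]
    ring

lemma phi_coord (q : ℝ) (hq : 2 < q) (a b : ℝ) :
    |Real.sign a * |a| ^ (q - 1) - Real.sign b * |b| ^ (q - 1)|
      ≤ (q - 1) * max |a| |b| ^ (q - 2) * |a - b| := by
  rw [phi_eq, phi_eq]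
  set C := (q - 1) * max |a| |b| ^ (q - 2) with hC
  have hconv : Convex ℝ (Set.uIcc b a) := convex_uIcc b a
  have hderiv : ∀ x ∈ Set.uIcc b a,
      HasDerivWithinAt (fun x => x * |x| ^ (q - 2)) ((q - 1) * |x| ^ (q - 2)) (Set.uIcc b a) x :=
    fun x _ => (phi_deriv q hq x).hasDerivWithinAt
  have hbound : ∀ x ∈ Set.uIcc b a, ‖(q - 1) * |x| ^ (q - 2)‖ ≤ C := by
    intro x hx
    rw [Set.uIcc, Set.mem_Icc] at hx
    have h1 : |x| ≤ max |b ⊓ a| |b ⊔ a| := abs_le_max_abs_abs hx.1 hx.2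
    have h2 : max |b ⊓ a| |b ⊔ a| ≤ max |a| |b| := by
      rcases le_total b a with h | h
      · simp [inf_eq_left.2 h, sup_eq_right.2 h, max_comm]
      · simp [inf_eq_right.2 h, sup_eq_left.2 h]
    have h3 : |x| ≤ max |a| |b| := h1.trans h2
    rw [Real.norm_eq_abs, abs_of_nonneg (mul_nonneg (by linarith) (Real.rpow_nonneg (abs_nonneg x) _))]
    exact mul_le_mul_of_nonneg_left
      (Real.rpow_le_rpow (abs_nonneg x) h3 (by linarith)) (by linarith)
  have := hconv.norm_image_sub_le_of_norm_hasDerivWithin_le hderiv hbound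
    (Set.left_mem_uIcc) (Set.right_mem_uIcc)
  simpa [Real.norm_eq_abs] using this

open Finset in
theorem phi_lipschitz_lp (d : ℕ) (p q : ℝ) (hp1 : 1 < p) (hp2 : p ≤ 2)
    (hpq : 1 / p + 1 / q = 1) (hq : 2 < q) (u v : Fin d → ℝ) :
    (∑ i, |Real.sign (u i) * |u i| ^ (q - 1) - Real.sign (v i) * |v i| ^ (q - 1)| ^ p) ^ (1 / p)
      ≤ 2 * (q - 1)
        * max ((∑ i, |u i| ^ q) ^ (1 / q)) ((∑ i, |v i| ^ q) ^ (1 / q)) ^ (q - 2)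
        * (∑ i, |u i - v i| ^ q) ^ (1 / q) := by
  have hp0 : (0:ℝ) < p := by linarith
  have hq0 : (0:ℝ) < q := by linarith
  have hq1 : (0:ℝ) < q - 1 := by linarith
  have hq2 : (0:ℝ) < q - 2 := by linarith
  have hppq : p * (q - 1) = q := by
    field_simp at hpq
    nlinarith [hpq]
  set r : ℝ := (q - 1) / (q - 2) with hr
  set s : ℝ := q - 1 with hs
  have hrs : r.HolderConjugate s := by
    rw [Real.holderConjugate_iff]
    constructor
    · rw [hr]; rw [lt_div_iff₀ hq2]; linarith
    · rw [hr, hs, inv_div, ← one_div, ← add_div, div_eq_one_iff_eq (by linarith)]; ring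
  set M : Fin d → ℝ := fun i => max |u i| |v i| with hM
  have hM0 : ∀ i, 0 ≤ M i := fun i => le_trans (abs_nonneg _) (le_max_left _ _)
  set Su := ∑ i, |u i| ^ q with hSu
  set Sv := ∑ i, |v i| ^ q with hSv
  set D := ∑ i, |u i - v i| ^ q with hD
  set Mq := max Su Sv with hMq
  have hSu0 : 0 ≤ Su := sum_nonneg fun i _ => Real.rpow_nonneg (abs_nonneg _) _
  have hSv0 : 0 ≤ Sv := sum_nonneg fun i _ => Real.rpow_nonneg (abs_nonneg _) _
  have hD0 : 0 ≤ D := sum_nonneg fun i _ => Real.rpow_nonneg (abs_nonneg _) _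
  have hMq0 : 0 ≤ Mq := le_trans hSu0 (le_max_left _ _)
  -- step 1+2: coordinatewise bound and expand
  have step1 : (∑ i, |Real.sign (u i) * |u i| ^ (q - 1) - Real.sign (v i) * |v i| ^ (q - 1)| ^ p)
      ≤ (q-1)^p * ∑ i, M i ^ ((q-2)*p) * |u i - v i| ^ p := by
    rw [mul_sum]
    refine sum_le_sum fun i _ => ?_
    have h1 := Real.rpow_le_rpow (abs_nonneg _) (phi_coord q hq (u i) (v i)) hp0.le
    refine h1.trans_eq ?_
    rw [Real.mul_rpow (mul_nonneg hq1.le (Real.rpow_nonneg (hM0 i) _)) (abs_nonneg _),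
      Real.mul_rpow hq1.le (Real.rpow_nonneg (hM0 i) _),
      ← Real.rpow_mul (hM0 i)]
    ring
  -- step 3: Hölder
  have holder : (∑ i, M i ^ ((q-2)*p) * |u i - v i| ^ p)
      ≤ (∑ i, M i ^ q) ^ (1/r) * D ^ (1/s) := by
    have h := Real.inner_le_Lp_mul_Lq_of_nonneg (univ : Finset (Fin d))
      (f := fun i => M i ^ ((q-2)*p)) (g := fun i => |u i - v i| ^ p) hrs
      (fun i _ => Real.rpow_nonneg (hM0 i) _)
      (fun i _ => Real.rpow_nonneg (abs_nonneg _) _)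
    refine h.trans_eq ?_
    have her : (q-2)*p*r = q := by
      rw [hr]
      field_simp
      rw [hs] at hppq
      linear_combination hppq
    have h1 : ∀ i : Fin d, (M i ^ ((q-2)*p)) ^ r = M i ^ q := fun i => by
      rw [← Real.rpow_mul (hM0 i), her]
    have h2 : ∀ i : Fin d, (|u i - v i| ^ p) ^ s = |u i - v i| ^ q := fun i => by
      rw [← Real.rpow_mul (abs_nonneg _), hppq]
    simp only [h1, h2]
    rw [hD]
  -- step 4: sum of maxes
  have hsumM : (∑ i, M i ^ q) ≤ 2 * Mq := by
    have h1 : (∑ i, M i ^ q) ≤ Su + Sv := by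
      rw [hSu, hSv, ← sum_add_distrib]
      refine sum_le_sum fun i _ => ?_
      rcases max_cases |u i| |v i| with ⟨h, _⟩ | ⟨h, _⟩ <;> rw [hM] <;> simp only [h]
      · exact le_add_of_nonneg_right (Real.rpow_nonneg (abs_nonneg _) _)
      · exact le_add_of_nonneg_left (Real.rpow_nonneg (abs_nonneg _) _)
    refine h1.trans ?_
    rw [two_mul]
    exact add_le_add (le_max_left _ _) (le_max_right _ _)
  have hsumM0 : 0 ≤ ∑ i, M i ^ q := sum_nonneg fun i _ => Real.rpow_nonneg (hM0 i) _
  -- combine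
  have hr0 : 0 < r := by rw [hr]; positivity
  have hs0 : 0 < s := hq1
  have key : (∑ i, |Real.sign (u i) * |u i| ^ (q - 1) - Real.sign (v i) * |v i| ^ (q - 1)| ^ p)
      ≤ (q-1)^p * ((2*Mq) ^ (1/r) * D ^ (1/s)) := by
    refine step1.trans ?_
    refine mul_le_mul_of_nonneg_left ?_ (Real.rpow_nonneg hq1.le _)
    refine holder.trans ?_
    exact mul_le_mul_of_nonneg_right
      (Real.rpow_le_rpow hsumM0 hsumM (by positivity)) (Real.rpow_nonneg hD0 _)
  -- max of rpows
  have hmax : max (Su ^ (1/q)) (Sv ^ (1/q)) = Mq ^ (1/q) := by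
    rcases le_total Su Sv with h | h
    · rw [hMq, max_eq_right h, max_eq_right (Real.rpow_le_rpow hSu0 h (by positivity))]
    · rw [hMq, max_eq_left h, max_eq_left (Real.rpow_le_rpow hSv0 h (by positivity))]
  rw [hmax, ← Real.rpow_mul hMq0]
  -- final computation
  have lhs_le := Real.rpow_le_rpow (sum_nonneg fun i _ => Real.rpow_nonneg (abs_nonneg _) _)
    key (by positivity : (0:ℝ) ≤ 1/p)
  refine lhs_le.trans ?_
  have e0 : (0:ℝ) ≤ 2*Mq := by linarith
  rw [Real.mul_rpow (Real.rpow_nonneg hq1.le _)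
      (mul_nonneg (Real.rpow_nonneg e0 _) (Real.rpow_nonneg hD0 _)),
    Real.mul_rpow (Real.rpow_nonneg e0 _) (Real.rpow_nonneg hD0 _),
    ← Real.rpow_mul hq1.le, ← Real.rpow_mul e0, ← Real.rpow_mul hD0]
  have e1 : p * (1/p) = 1 := by field_simp
  have e2 : 1/r * (1/p) = 1/q * (q-2) := by
    rw [hr]
    field_simp
    linarith [hppq]
  have e3 : 1/s * (1/p) = 1/q := by
    rw [hs]
    rw [div_mul_div_comm, one_mul, mul_comm, hppq]
  rw [e1, e2, e3, Real.rpow_one]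
  have e4 : (2*Mq) ^ (1/q * (q-2)) ≤ 2 * Mq ^ (1/q * (q-2)) := by
    rw [Real.mul_rpow (by norm_num) hMq0]
    refine mul_le_mul_of_nonneg_right ?_ (Real.rpow_nonneg hMq0 _)
    calc (2:ℝ) ^ (1/q * (q-2)) ≤ 2 ^ (1:ℝ) := by
          refine Real.rpow_le_rpow_of_exponent_le (by norm_num) ?_
          rw [div_mul_eq_mul_div, one_mul, div_le_one hq0]; linarith
      _ = 2 := Real.rpow_one 2
  calc (q-1) * ((2*Mq) ^ (1/q*(q-2)) * D ^ (1/q))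
      ≤ (q-1) * (2 * Mq ^ (1/q*(q-2)) * D ^ (1/q)) := by
        refine mul_le_mul_of_nonneg_left
          (mul_le_mul_of_nonneg_right e4 (Real.rpow_nonneg hD0 _)) hq1.le
    _ = 2 * (q-1) * Mq ^ (1/q*(q-2)) * D ^ (1/q) := by ring
end

section
/- Let p ∈ (1,2] with conjugate q ≥ 2, and for nonzero θ ∈ ℝ^d let a(θ)_i = sign(θ_i)|θ_i|^{q-1}/‖θ‖_q^{q-1}. Then for any nonzero θ, θ' ∈ ℝ^d: ‖a(θ) − a(θ')‖_p ≤ 3(q−1)·‖θ − θ'‖_q / max{‖θ‖_q, ‖θ'‖_q}. -/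
set_option maxHeartbeats 1000000

open Finset Real

/-- `c^r - b^r ≤ r c^{r-1} (c-b)` for `0 ≤ b ≤ c`, `1 ≤ r`. -/
lemma bern_aux {b c r : ℝ} (hb : 0 ≤ b) (hba : b ≤ c) (hr : 1 ≤ r) :
    c ^ r - b ^ r ≤ r * c ^ (r - 1) * (c - b) := by
  rcases eq_or_lt_of_le (hb.trans hba) with hc | hc
  · have hb0 : b = 0 := le_antisymm (hba.trans hc.symm.le) hb
    have hr0 : r ≠ 0 := by linarith
    rw [hb0, ← hc, Real.zero_rpow hr0]
    simp
  · have key := one_add_mul_self_le_rpow_one_add (s := b / c - 1) (by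
      have : 0 ≤ b / c := div_nonneg hb hc.le
      linarith) hr
    have hbc : 1 + (b / c - 1) = b / c := by ring
    rw [hbc, Real.div_rpow hb hc.le] at key
    have hcr : (0 : ℝ) < c ^ r := Real.rpow_pos_of_pos hc r
    have hc0 : c ≠ 0 := hc.ne'
    have h1 : c ^ (r - 1) * c = c ^ r := by
      rw [Real.rpow_sub hc, Real.rpow_one]
      field_simp
    have h2 : b / c * c = b := by field_simp
    have h3 : b ^ r / c ^ r * c ^ r = b ^ r := by field_simp
    have h4 : b / c * c ^ r = b * c ^ (r - 1) := by
      linear_combination (-(b / c)) * h1 + c ^ (r - 1) * h2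
    have this2 := mul_le_mul_of_nonneg_right key hcr.le
    have expand : (1 + r * (b / c - 1)) * c ^ r
        = c ^ r + r * (b / c * c ^ r) - r * c ^ r := by ring
    rw [expand, h4, h3] at this2
    have h5 : r * c ^ (r - 1) * (c - b) = r * c ^ r - r * (b * c ^ (r - 1)) := by
      rw [← h1]; ring
    linarith

lemma mul_rpow_self {q : ℝ} (hq : 2 ≤ q) {y : ℝ} (hy : 0 ≤ y) :
    y * y ^ (q - 2) = y ^ (q - 1) := by
  rcases eq_or_lt_of_le hy with h0 | h0
  · rw [← h0, Real.zero_rpow (by linarith : q - 1 ≠ 0), zero_mul]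
  · rw [show q - 1 = 1 + (q - 2) by ring, Real.rpow_add h0, Real.rpow_one]

lemma g_lip_ord {q : ℝ} (hq : 2 ≤ q) {x y : ℝ} (hy : 0 ≤ y) (hyx : y ≤ x) :
    |x * x ^ (q - 2) - y * y ^ (q - 2)| ≤ (q - 1) * x ^ (q - 2) * (x - y) := by
  have hx : 0 ≤ x := hy.trans hyx
  rw [mul_rpow_self hq hy, mul_rpow_self hq hx]
  have hmono : y ^ (q - 1) ≤ x ^ (q - 1) := Real.rpow_le_rpow hy hyx (by linarith)
  rw [abs_of_nonneg (by linarith)]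
  have h := bern_aux (r := q - 1) hy hyx (by linarith)
  rw [show q - 1 - 1 = q - 2 by ring] at h
  exact h

lemma g_lip_mixed {q : ℝ} (hq : 2 ≤ q) {x y : ℝ} (hx : 0 ≤ x) (hy : 0 ≤ y) :
    x * x ^ (q - 2) + y * y ^ (q - 2) ≤ (q - 1) * max x y ^ (q - 2) * (x + y) := by
  have hM : 0 ≤ max x y := le_trans hx (le_max_left _ _)
  have hxM : x ^ (q - 2) ≤ max x y ^ (q - 2) :=
    Real.rpow_le_rpow hx (le_max_left _ _) (by linarith)
  have hyM : y ^ (q - 2) ≤ max x y ^ (q - 2) :=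
    Real.rpow_le_rpow hy (le_max_right _ _) (by linarith)
  have h1 : x * x ^ (q - 2) ≤ x * max x y ^ (q - 2) := mul_le_mul_of_nonneg_left hxM hx
  have h2 : y * y ^ (q - 2) ≤ y * max x y ^ (q - 2) := mul_le_mul_of_nonneg_left hyM hy
  have hMq : 0 ≤ max x y ^ (q - 2) := Real.rpow_nonneg hM _
  nlinarith [mul_nonneg (mul_nonneg hMq hx) hx, mul_nonneg hMq (add_nonneg hx hy)]

lemma g_lip_nn {q : ℝ} (hq : 2 ≤ q) {x y : ℝ} (hx : 0 ≤ x) (hy : 0 ≤ y) :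
    |x * |x| ^ (q - 2) - y * |y| ^ (q - 2)|
      ≤ (q - 1) * max |x| |y| ^ (q - 2) * |x - y| := by
  rw [abs_of_nonneg hx, abs_of_nonneg hy]
  rcases le_total y x with h | h
  · rw [max_eq_left h, abs_of_nonneg (by linarith : (0:ℝ) ≤ x - y)]
    exact g_lip_ord hq hy h
  · rw [max_eq_right h, abs_sub_comm, abs_sub_comm x y,
      abs_of_nonneg (by linarith : (0:ℝ) ≤ y - x)]
    exact g_lip_ord hq hx h

lemma g_lip_mix {q : ℝ} (hq : 2 ≤ q) {x y : ℝ} (hx : 0 ≤ x) (hy : y ≤ 0) :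
    |x * |x| ^ (q - 2) - y * |y| ^ (q - 2)|
      ≤ (q - 1) * max |x| |y| ^ (q - 2) * |x - y| := by
  rw [abs_of_nonneg hx, abs_of_nonpos hy]
  have hy' : 0 ≤ -y := by linarith
  have key := g_lip_mixed hq hx hy'
  have h1 : x * x ^ (q - 2) - y * (-y) ^ (q - 2)
      = x * x ^ (q - 2) + (-y) * (-y) ^ (q - 2) := by ring
  rw [h1, abs_of_nonneg (by positivity), abs_of_nonneg (by linarith : (0:ℝ) ≤ x - y),
    show x - y = x + (-y) by ring]
  exact key

lemma g_lip {q : ℝ} (hq : 2 ≤ q) (x y : ℝ) :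
    |x * |x| ^ (q - 2) - y * |y| ^ (q - 2)|
      ≤ (q - 1) * max |x| |y| ^ (q - 2) * |x - y| := by
  rcases le_total 0 x with hx | hx <;> rcases le_total 0 y with hy | hy
  · exact g_lip_nn hq hx hy
  · exact g_lip_mix hq hx hy
  · rw [abs_sub_comm, abs_sub_comm x y, max_comm]
    exact g_lip_mix hq hy hx
  · have hx' : 0 ≤ -x := by linarith
    have hy' : 0 ≤ -y := by linarith
    have key := g_lip_nn hq hx' hy'
    rw [abs_neg, abs_neg, show -x * |x| ^ (q - 2) - -y * |y| ^ (q - 2)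
        = -(x * |x| ^ (q - 2) - y * |y| ^ (q - 2)) by ring, abs_neg,
      show -x - -y = -(x - y) by ring, abs_neg] at key
    exact key

lemma sign_form {q : ℝ} (hq : 2 ≤ q) (x : ℝ) :
    Real.sign x * |x| ^ (q - 1) = x * |x| ^ (q - 2) := by
  rcases lt_trichotomy x 0 with h | h | h
  · rw [Real.sign_of_neg h, abs_of_neg h,
      ← mul_rpow_self hq (by linarith : (0:ℝ) ≤ -x)]
    ring
  · simp [h, Real.sign_zero]
  · rw [Real.sign_of_pos h, abs_of_pos h, ← mul_rpow_self hq h.le]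
    ring

lemma abs_g {q : ℝ} (x : ℝ) : |x * |x| ^ (q - 2)| = |x| * |x| ^ (q - 2) := by
  rw [abs_mul, abs_of_nonneg (Real.rpow_nonneg (abs_nonneg x) _)]

/-- |g x|^p = |x|^q -/
lemma abs_g_pow {p q : ℝ} (hq : 2 ≤ q) (hp0 : 0 < p) (hpq2 : p * (q - 1) = q) (x : ℝ) :
    (|x| * |x| ^ (q - 2)) ^ p = |x| ^ q := by
  rw [mul_rpow_self hq (abs_nonneg x), ← Real.rpow_mul (abs_nonneg x),
    show (q - 1) * p = q by linarith [hpq2, mul_comm p (q-1)]]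

/-- scalar extraction -/
lemma Lp_smul {d : ℕ} {p : ℝ} (hp0 : 0 < p) (f : Fin d → ℝ) (c : ℝ) :
    (∑ i, |f i * c| ^ p) ^ (1 / p) = (∑ i, |f i| ^ p) ^ (1 / p) * |c| := by
  have h1 : ∀ i ∈ Finset.univ, |f i * c| ^ p = |f i| ^ p * |c| ^ p := fun i _ => by
    rw [abs_mul, Real.mul_rpow (abs_nonneg _) (abs_nonneg _)]
  rw [Finset.sum_congr rfl h1, ← Finset.sum_mul,
    Real.mul_rpow (Finset.sum_nonneg fun i _ => Real.rpow_nonneg (abs_nonneg _) _)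
      (Real.rpow_nonneg (abs_nonneg _) _), one_div,
    Real.rpow_rpow_inv (abs_nonneg c) hp0.ne']

theorem aux (d : ℕ) (p q : ℝ) (hp1 : 1 < p) (hp2 : p ≤ 2)
    (hpq : 1 / p + 1 / q = 1) (hq : 2 ≤ q)
    (θ θ' : Fin d → ℝ) (hθ : θ ≠ 0) (hθ' : θ' ≠ 0)
    (a a' : Fin d → ℝ)
    (ha : ∀ i, a i = Real.sign (θ i) * |θ i| ^ (q - 1) / ((∑ j, |θ j| ^ q) ^ (1 / q)) ^ (q - 1))
    (ha' : ∀ i, a' i = Real.sign (θ' i) * |θ' i| ^ (q - 1) / ((∑ j, |θ' j| ^ q) ^ (1 / q)) ^ (q - 1))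
    (hTS : (∑ j, |θ' j| ^ q) ^ (1 / q) ≤ (∑ j, |θ j| ^ q) ^ (1 / q)) :
    (∑ i, |a i - a' i| ^ p) ^ (1 / p)
      ≤ 3 * (q - 1) * (∑ i, |θ i - θ' i| ^ q) ^ (1 / q) / (∑ i, |θ i| ^ q) ^ (1 / q) := by
  -- basic numeric facts
  have hp0 : (0:ℝ) < p := by linarith
  have hq0 : (0:ℝ) < q := by linarith
  have hp0' : p ≠ 0 := hp0.ne'
  have hq0' : q ≠ 0 := hq0.ne'
  have hpq2 : p * (q - 1) = q := by
    field_simp at hpq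
    nlinarith [hpq]
  have hq1 : (1:ℝ) ≤ q - 1 := by linarith
  -- notation
  set A := ∑ j, |θ j| ^ q with hAdef
  set B := ∑ j, |θ' j| ^ q with hBdef
  set C := ∑ j, |θ j - θ' j| ^ q with hCdef
  set S := A ^ (1 / q) with hSdef
  set T := B ^ (1 / q) with hTdef
  set Dn := C ^ (1 / q) with hDdef
  -- positivity
  have hA : 0 < A := by
    obtain ⟨i, hi⟩ := Function.ne_iff.mp hθ
    refine Finset.sum_pos' (fun j _ => Real.rpow_nonneg (abs_nonneg _) _) ⟨i, Finset.mem_univ i, ?_⟩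
    exact Real.rpow_pos_of_pos (abs_pos.mpr hi) _
  have hB : 0 < B := by
    obtain ⟨i, hi⟩ := Function.ne_iff.mp hθ'
    refine Finset.sum_pos' (fun j _ => Real.rpow_nonneg (abs_nonneg _) _) ⟨i, Finset.mem_univ i, ?_⟩
    exact Real.rpow_pos_of_pos (abs_pos.mpr hi) _
  have hC : 0 ≤ C := Finset.sum_nonneg fun j _ => Real.rpow_nonneg (abs_nonneg _) _
  have hS : 0 < S := Real.rpow_pos_of_pos hA _
  have hT : 0 < T := Real.rpow_pos_of_pos hB _
  have hD : 0 ≤ Dn := Real.rpow_nonneg hC _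
  have hSq : S ^ q = A := by
    rw [hSdef, ← Real.rpow_mul hA.le, one_div, inv_mul_cancel₀ hq0', Real.rpow_one]
  have hTq : T ^ q = B := by
    rw [hTdef, ← Real.rpow_mul hB.le, one_div, inv_mul_cancel₀ hq0', Real.rpow_one]
  have hBA : B ≤ A := by
    rw [← hSq, ← hTq]
    exact Real.rpow_le_rpow hT.le hTS hq0.le
  have hSq1 : 0 < S ^ (q - 1) := Real.rpow_pos_of_pos hS _
  have hTq1 : 0 < T ^ (q - 1) := Real.rpow_pos_of_pos hT _
  -- decomposition
  set u : Fin d → ℝ :=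
    fun i => (θ i * |θ i| ^ (q - 2) - θ' i * |θ' i| ^ (q - 2)) * (S ^ (q - 1))⁻¹ with hudef
  set v : Fin d → ℝ :=
    fun i => θ' i * |θ' i| ^ (q - 2) * ((S ^ (q - 1))⁻¹ - (T ^ (q - 1))⁻¹) with hvdef
  have hav : ∀ i, a i - a' i = u i + v i := by
    intro i
    rw [ha i, ha' i, sign_form hq, sign_form hq, hudef, hvdef]
    simp only [← hSdef, ← hTdef, ← hAdef, ← hBdef]
    rw [div_eq_mul_inv, div_eq_mul_inv]
    ring
  have mink := Real.Lp_add_le Finset.univ u v hp1.le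
  have hLHS : (∑ i, |a i - a' i| ^ p) ^ (1 / p) = (∑ i, |u i + v i| ^ p) ^ (1 / p) := by
    congr 1
    exact Finset.sum_congr rfl fun i _ => by rw [hav i]
  -- term u
  have hu_eq : (∑ i, |u i| ^ p) ^ (1 / p)
      = (∑ i, |θ i * |θ i| ^ (q - 2) - θ' i * |θ' i| ^ (q - 2)| ^ p) ^ (1 / p)
        * (S ^ (q - 1))⁻¹ := by
    rw [hudef]
    have := Lp_smul hp0 (fun i => θ i * |θ i| ^ (q - 2) - θ' i * |θ' i| ^ (q - 2))
      (S ^ (q - 1))⁻¹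
    rw [this, abs_of_pos (inv_pos.mpr hSq1)]
  have hu_bound : (∑ i, |θ i * |θ i| ^ (q - 2) - θ' i * |θ' i| ^ (q - 2)| ^ p) ^ (1 / p)
      ≤ (q - 1) * (2 * Dn * S ^ (q - 2)) := by
    have hMnn : ∀ i : Fin d, 0 ≤ max |θ i| |θ' i| :=
      fun i => le_trans (abs_nonneg _) (le_max_left _ _)
    have hqp2 : (q - 2) * p = q - p := by linear_combination hpq2
    -- pointwise bound
    have hpt : ∀ i ∈ Finset.univ, |θ i * |θ i| ^ (q - 2) - θ' i * |θ' i| ^ (q - 2)| ^ p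
        ≤ (q - 1) ^ p * ((max |θ i| |θ' i|) ^ (q - p) * |θ i - θ' i| ^ p) := by
      intro i _
      have h1 := Real.rpow_le_rpow (abs_nonneg _) (g_lip hq (θ i) (θ' i)) hp0.le
      refine h1.trans (le_of_eq ?_)
      rw [Real.mul_rpow (by positivity) (abs_nonneg _),
        Real.mul_rpow (by linarith : (0:ℝ) ≤ q - 1) (Real.rpow_nonneg (hMnn i) _),
        ← Real.rpow_mul (hMnn i), hqp2, mul_assoc]
    have hsum1 : ∑ i, |θ i * |θ i| ^ (q - 2) - θ' i * |θ' i| ^ (q - 2)| ^ p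
        ≤ (q - 1) ^ p * ∑ i, (max |θ i| |θ' i|) ^ (q - p) * |θ i - θ' i| ^ p := by
      rw [Finset.mul_sum]
      exact Finset.sum_le_sum hpt
    -- Hoelder step
    have HC : ∑ i, (max |θ i| |θ' i|) ^ (q - p) * |θ i - θ' i| ^ p
        ≤ (2 * A) ^ ((q - p) / q) * C ^ (p / q) := by
      have hsumM : ∑ i, (max |θ i| |θ' i|) ^ q ≤ 2 * A := by
        have hper : ∀ i ∈ Finset.univ, (max |θ i| |θ' i|) ^ q ≤ |θ i| ^ q + |θ' i| ^ q := by
          intro i _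
          rcases max_cases |θ i| |θ' i| with ⟨h1, _⟩ | ⟨h1, _⟩ <;> rw [h1]
          · exact le_add_of_nonneg_right (Real.rpow_nonneg (abs_nonneg _) _)
          · exact le_add_of_nonneg_left (Real.rpow_nonneg (abs_nonneg _) _)
        calc ∑ i, (max |θ i| |θ' i|) ^ q ≤ ∑ i, (|θ i| ^ q + |θ' i| ^ q) :=
              Finset.sum_le_sum hper
          _ = A + B := by rw [Finset.sum_add_distrib, ← hAdef, ← hBdef]
          _ ≤ 2 * A := by linarith
      rcases eq_or_lt_of_le hq with hq2 | hq2
      · -- q = 2, p = 2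
        subst hq2
        have hp2' : p = 2 := by linear_combination hpq2
        subst hp2'
        simp only [show (2:ℝ) - 2 = 0 by norm_num, Real.rpow_zero, one_mul, zero_div,
          show (2:ℝ)/2 = 1 by norm_num, Real.rpow_one]
        exact le_of_eq hCdef.symm
      · -- 2 < q
        have hpq' : p < q := lt_of_le_of_lt hp2 hq2
        have hqp0 : 0 < q - p := by linarith
        have hconj : Real.HolderConjugate (q / (q - p)) (q / p) := by
          rw [Real.holderConjugate_iff]; constructor
          · rw [lt_div_iff₀ hqp0]; linarith
          · rw [inv_div, inv_div, ← add_div,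
              show q - p + p = q by ring, div_self hq0']
        have hold := Real.inner_le_Lp_mul_Lq Finset.univ
          (fun i => (max |θ i| |θ' i|) ^ (q - p)) (fun i => |θ i - θ' i| ^ p) hconj
        have e1 : ∀ i ∈ Finset.univ,
            |(max |θ i| |θ' i|) ^ (q - p)| ^ (q / (q - p)) = (max |θ i| |θ' i|) ^ q := by
          intro i _
          rw [abs_of_nonneg (Real.rpow_nonneg (hMnn i) _), ← Real.rpow_mul (hMnn i),
            show (q - p) * (q / (q - p)) = q by field_simp]
        have e2 : ∀ i ∈ Finset.univ,
            |(|θ i - θ' i| ^ p)| ^ (q / p) = |θ i - θ' i| ^ q := by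
          intro i _
          rw [abs_of_nonneg (Real.rpow_nonneg (abs_nonneg _) _), ← Real.rpow_mul (abs_nonneg _),
            show p * (q / p) = q by field_simp]
        rw [Finset.sum_congr rfl e1, Finset.sum_congr rfl e2, ← hCdef,
          one_div_div, one_div_div] at hold
        refine hold.trans ?_
        refine mul_le_mul_of_nonneg_right ?_ (Real.rpow_nonneg hC _)
        exact Real.rpow_le_rpow
          (Finset.sum_nonneg fun i _ => Real.rpow_nonneg (hMnn i) _) hsumM
          (div_nonneg hqp0.le hq0.le)
    -- combine
    have hsum2 : ∑ i, |θ i * |θ i| ^ (q - 2) - θ' i * |θ' i| ^ (q - 2)| ^ p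
        ≤ (q - 1) ^ p * ((2 * A) ^ ((q - p) / q) * C ^ (p / q)) :=
      hsum1.trans (mul_le_mul_of_nonneg_left HC (Real.rpow_nonneg (by linarith) _))
    have hfin := Real.rpow_le_rpow
      (Finset.sum_nonneg fun i _ => Real.rpow_nonneg (abs_nonneg _) _)
      hsum2 (by positivity : (0:ℝ) ≤ 1/p)
    refine hfin.trans ?_
    have hq1' : (0:ℝ) ≤ q - 1 := by linarith
    have h2A : (0:ℝ) ≤ (2*A) ^ ((q-p)/q) := Real.rpow_nonneg (by linarith) _
    rw [Real.mul_rpow (Real.rpow_nonneg hq1' _) (mul_nonneg h2A (Real.rpow_nonneg hC _)),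
      Real.mul_rpow h2A (Real.rpow_nonneg hC _),
      one_div, Real.rpow_rpow_inv hq1' hp0',
      ← Real.rpow_mul (by linarith : (0:ℝ) ≤ 2*A), ← Real.rpow_mul hC,
      show p / q * p⁻¹ = 1 / q by field_simp, ← hDdef]
    have hAe : (2*A) ^ ((q-p)/q * p⁻¹) = 2 ^ ((q-p)/q * p⁻¹) * S ^ (q-2) := by
      rw [Real.mul_rpow (by norm_num) hA.le, ← hSq, ← Real.rpow_mul hS.le,
        show q * ((q-p)/q * p⁻¹) = q - 2 by rw [show q * ((q-p)/q * p⁻¹) = (q-p)/p by field_simp, div_eq_iff hp0']; linear_combination -hqp2]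
    have h2e : (2:ℝ) ^ ((q-p)/q * p⁻¹) ≤ 2 := by
      have he1 : (q-p)/q * p⁻¹ ≤ 1 := by
        rw [show (q-p)/q * p⁻¹ = (q-p)/(q*p) by ring, div_le_one (by positivity)]
        nlinarith [hpq2]
      calc (2:ℝ) ^ ((q-p)/q * p⁻¹) ≤ 2 ^ (1:ℝ) :=
            Real.rpow_le_rpow_of_exponent_le one_le_two he1
        _ = 2 := Real.rpow_one 2
    rw [hAe]
    have hS2 : (0:ℝ) ≤ S ^ (q-2) := Real.rpow_nonneg hS.le _
    have hmul : 2 ^ ((q-p)/q * p⁻¹) * S ^ (q-2) * Dn ≤ 2 * S ^ (q-2) * Dn :=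
      mul_le_mul_of_nonneg_right (mul_le_mul_of_nonneg_right h2e hS2) hD
    nlinarith [hmul, hq1', mul_le_mul_of_nonneg_left hmul hq1']
  -- term v
  have hST : S - T ≤ Dn := by
    have mk := Real.Lp_add_le Finset.univ θ' (fun i => θ i - θ' i) (by linarith : (1:ℝ) ≤ q)
    rw [← hBdef, ← hCdef, ← hTdef, ← hDdef] at mk
    have hLS : (∑ i, |θ' i + (θ i - θ' i)| ^ q) ^ (1 / q) = S := by
      rw [hSdef, hAdef]
      congr 1
      exact Finset.sum_congr rfl fun i _ => by ring_nf
    rw [hLS] at mk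
    linarith
  have hfac : S ^ (q - 1) = S ^ (q - 2) * S := by
    rw [show q - 1 = q - 2 + 1 by ring, Real.rpow_add hS, Real.rpow_one]
  have hSq2 : 0 < S ^ (q - 2) := Real.rpow_pos_of_pos hS _
  have hv_bound : (∑ i, |v i| ^ p) ^ (1 / p) ≤ (q - 1) * Dn / S := by
    have hsum : ∀ i ∈ Finset.univ, |θ' i * |θ' i| ^ (q - 2)| ^ p = |θ' i| ^ q :=
      fun i _ => by rw [abs_g, abs_g_pow hq hp0 hpq2]
    have hBp : B ^ (1 / p) = T ^ (q - 1) := by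
      rw [← hTq, ← Real.rpow_mul hT.le,
        show q * (1 / p) = q - 1 by rw [mul_one_div, div_eq_iff hp0']; linear_combination -hpq2]
    have hABS : |(S ^ (q - 1))⁻¹ - (T ^ (q - 1))⁻¹| = (T ^ (q - 1))⁻¹ - (S ^ (q - 1))⁻¹ := by
      rw [abs_sub_comm]
      refine abs_of_nonneg (sub_nonneg.mpr ?_)
      exact inv_anti₀ hTq1 (Real.rpow_le_rpow hT.le hTS (by linarith))
    have hveq : (∑ i, |v i| ^ p) ^ (1 / p)
        = T ^ (q - 1) * ((T ^ (q - 1))⁻¹ - (S ^ (q - 1))⁻¹) := by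
      rw [hvdef, Lp_smul hp0 (fun i => θ' i * |θ' i| ^ (q - 2)) _,
        Finset.sum_congr rfl hsum, ← hBdef, hBp, hABS]
    have hval : T ^ (q - 1) * ((T ^ (q - 1))⁻¹ - (S ^ (q - 1))⁻¹)
        = (S ^ (q - 1) - T ^ (q - 1)) / S ^ (q - 1) := by
      field_simp
    have hbern := bern_aux (r := q - 1) hT.le hTS hq1
    rw [show q - 1 - 1 = q - 2 by ring] at hbern
    rw [hveq, hval]
    have hstep : S ^ (q - 1) - T ^ (q - 1) ≤ (q - 1) * S ^ (q - 2) * Dn := by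
      calc S ^ (q - 1) - T ^ (q - 1) ≤ (q - 1) * S ^ (q - 2) * (S - T) := hbern
        _ ≤ (q - 1) * S ^ (q - 2) * Dn := by
            exact mul_le_mul_of_nonneg_left hST (by positivity)
    calc (S ^ (q - 1) - T ^ (q - 1)) / S ^ (q - 1)
        ≤ ((q - 1) * S ^ (q - 2) * Dn) / S ^ (q - 1) :=
          (div_le_div_iff_of_pos_right hSq1).mpr hstep
      _ = (q - 1) * Dn / S := by rw [hfac]; field_simp
  -- combine
  have hu_total : (∑ i, |u i| ^ p) ^ (1 / p) ≤ 2 * (q - 1) * Dn / S := by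
    rw [hu_eq]
    have h1 : S ^ (q - 2) * (S ^ (q - 1))⁻¹ = S⁻¹ := by
      rw [show q - 2 = q - 1 - 1 by ring, Real.rpow_sub hS (q-1) 1, Real.rpow_one]
      field_simp
    calc (∑ i, |θ i * |θ i| ^ (q - 2) - θ' i * |θ' i| ^ (q - 2)| ^ p) ^ (1 / p)
          * (S ^ (q - 1))⁻¹
        ≤ (q - 1) * (2 * Dn * S ^ (q - 2)) * (S ^ (q - 1))⁻¹ := by
          exact mul_le_mul_of_nonneg_right hu_bound (inv_pos.mpr hSq1).le
      _ = 2 * (q - 1) * Dn * (S ^ (q - 2) * (S ^ (q - 1))⁻¹) := by ring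
      _ = 2 * (q - 1) * Dn / S := by rw [h1, div_eq_mul_inv]
  rw [hLHS]
  calc (∑ i, |u i + v i| ^ p) ^ (1 / p)
      ≤ (∑ i, |u i| ^ p) ^ (1 / p) + (∑ i, |v i| ^ p) ^ (1 / p) := mink
    _ ≤ 2 * (q - 1) * Dn / S + (q - 1) * Dn / S := add_le_add hu_total hv_bound
    _ = 3 * (q - 1) * Dn / S := by ring

open Finset in
theorem argmax_stability (d : ℕ) (p q : ℝ) (hp1 : 1 < p) (hp2 : p ≤ 2)
    (hpq : 1 / p + 1 / q = 1) (hq : 2 ≤ q)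
    (θ θ' : Fin d → ℝ) (hθ : θ ≠ 0) (hθ' : θ' ≠ 0)
    (a a' : Fin d → ℝ)
    (ha : ∀ i, a i = Real.sign (θ i) * |θ i| ^ (q - 1) / ((∑ j, |θ j| ^ q) ^ (1 / q)) ^ (q - 1))
    (ha' : ∀ i, a' i = Real.sign (θ' i) * |θ' i| ^ (q - 1) / ((∑ j, |θ' j| ^ q) ^ (1 / q)) ^ (q - 1)) :
    (∑ i, |a i - a' i| ^ p) ^ (1 / p)
      ≤ 3 * (q - 1) * (∑ i, |θ i - θ' i| ^ q) ^ (1 / q)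
        / max ((∑ i, |θ i| ^ q) ^ (1 / q)) ((∑ i, |θ' i| ^ q) ^ (1 / q)) := by
  rcases le_total ((∑ j, |θ' j| ^ q) ^ (1 / q)) ((∑ j, |θ j| ^ q) ^ (1 / q)) with h | h
  · rw [max_eq_left h]
    exact aux d p q hp1 hp2 hpq hq θ θ' hθ hθ' a a' ha ha' h
  · rw [max_eq_right h]
    have key := aux d p q hp1 hp2 hpq hq θ' θ hθ' hθ a' a ha' ha h
    have e1 : ∀ i ∈ Finset.univ, |a' i - a i| ^ p = |a i - a' i| ^ p :=
      fun i _ => by rw [abs_sub_comm]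
    have e2 : ∀ i ∈ Finset.univ, |θ' i - θ i| ^ q = |θ i - θ' i| ^ q :=
      fun i _ => by rw [abs_sub_comm]
    rw [Finset.sum_congr rfl e1, Finset.sum_congr rfl e2] at key
    exact key
end
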